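/- Every finite connected graph G with at least one edge admits a strong trace, i.e., a double trace having no nontrivial N-repetition at any vertex. -/

import Mathlib

namespace StrongTraces

open SimpleGraph Finset

/-- Cyclic successor on `Fin n`. -/
def csucc {n : ℕ} (i : Fin n) : Fin n :=
  ⟨(i.val + 1) % n, Nat.mod_lt _ (by have := i.isLt; omega)⟩

/-- Cyclic predecessor on `Fin n`. -/
def cpred {n : ℕ} (i : Fin n) : Fin n :=
  ⟨(i.val + n - 1) % n, Nat.mod_lt _ (by have := i.isLt; omega)⟩

variable {V : Type*} [Fintype V] [DecidableEq V]

/-- A double trace of `G`: a closed walk, encoded as a cyclic sequence of `n` vertices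
(read cyclically, so step `i` goes from `f i` to `f (csucc i)`), that traverses every
edge of `G` exactly twice.  (`n = 0` encodes the trivial closed walk.) -/
structure DoubleTrace (G : SimpleGraph V) where
  n : ℕ
  f : Fin n → V
  adj : ∀ i : Fin n, G.Adj (f i) (f (csucc i))
  twice : ∀ e ∈ G.edgeSet,
    (Finset.univ.filter fun i : Fin n => s(f i, f (csucc i)) = e).card = 2

variable {G : SimpleGraph V}

/-- `W` has an `N`-repetition at `v`: at every visit of `W` to `v`, the predecessor
lies in `N` if and only if the successor lies in `N`. -/
def DoubleTrace.HasRepetition (W : DoubleTrace G) (v : V) (N : Set V) : Prop :=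
  ∀ i : Fin W.n, W.f i = v → (W.f (cpred i) ∈ N ↔ W.f (csucc i) ∈ N)

/-- A strong trace: a double trace all of whose repetitions are trivial
(`N = ∅` or `N = N(v)`). -/
def DoubleTrace.IsStrong (W : DoubleTrace G) : Prop :=
  ∀ (v : V) (N : Set V), N ⊆ G.neighborSet v → W.HasRepetition v N →
    N = ∅ ∨ N = G.neighborSet v

/-- A `d`-stable trace: a double trace with no `N`-repetition with `1 ≤ |N| ≤ d`
at any vertex. -/
def DoubleTrace.IsStable (W : DoubleTrace G) (d : ℕ) : Prop :=
  ∀ (v : V) (N : Set V), N ⊆ G.neighborSet v → 1 ≤ N.ncard → N.ncard ≤ d →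
    ¬ W.HasRepetition v N

/-- The number of times `W` makes the directed step from `u` to `v`. -/
def DoubleTrace.traversalCount (W : DoubleTrace G) (u v : V) : ℕ :=
  (Finset.univ.filter fun i : Fin W.n => W.f i = u ∧ W.f (csucc i) = v).card

/-- `W` traverses every edge once in each direction. -/
def DoubleTrace.IsAntiparallel (W : DoubleTrace G) : Prop :=
  ∀ u v : V, G.Adj u v → W.traversalCount u v = 1

/-- `W` traverses every edge twice in the same direction. -/
def DoubleTrace.IsParallel (W : DoubleTrace G) : Prop :=
  ∀ u v : V, G.Adj u v → W.traversalCount u v = 0 ∨ W.traversalCount u v = 2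

/-- The adjacency relation of the vertex figure of `v` with respect to `W`:
two edges incident with `v` are related if they occur consecutively at some visit
of `W` to `v`. -/
def DoubleTrace.VertexFigureRel (W : DoubleTrace G) (v : V) :
    G.incidenceSet v → G.incidenceSet v → Prop :=
  fun e e' => ∃ i : Fin W.n, W.f i = v ∧
    ((e.1 = s(W.f (cpred i), v) ∧ e'.1 = s(v, W.f (csucc i))) ∨
     (e'.1 = s(W.f (cpred i), v) ∧ e.1 = s(v, W.f (csucc i))))

/-- The vertex figure of `v` with respect to `W` is connected: the equivalence
relation generated by consecutiveness at visits to `v` relates any two edges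
incident with `v`. -/
def DoubleTrace.VertexFigureConnected (W : DoubleTrace G) (v : V) : Prop :=
  ∀ e e' : G.incidenceSet v, Relation.EqvGen (W.VertexFigureRel v) e e'

/-- The number of connected components of the vertex figure of `v` with respect to
`W`, i.e. the number of equivalence classes of the equivalence relation generated by
consecutiveness at visits to `v`. -/
noncomputable def DoubleTrace.vertexFigureComponents (W : DoubleTrace G) (v : V) : ℕ :=
  Nat.card (Quot (W.VertexFigureRel v))

/-- The number of edges of `H` lying in the connected component `c` of `H`. -/
noncomputable def componentEdgeCount (H : SimpleGraph V) (c : H.ConnectedComponent) : ℕ :=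
  Nat.card {e : Sym2 V | e ∈ H.edgeSet ∧ ∀ x ∈ e, H.connectedComponentMk x = c}

/-! Take a double trace (one exists: keep splicing detours `x → y → x` into a closed walk until
every edge is traversed twice) with as few pairs `(v, N)` as possible at which it has an
`N`-repetition. Suppose it had a nontrivial `N`-repetition at `v`. Since every edge is traversed
twice, some visit to `v` has both neighbours in `N` and another has both outside `N`. Reversing
the closed subwalk between these two visits destroys the `N`-repetition at `v` and creates no new
repetition: at all other visits the unordered pair of neighbours is unchanged, and a new
repetition `N'` at `v` would make `N ∩ N'` fail at exactly one visit, whereas the visits at which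
a repetition fails always come in pairs. -/

lemma val_csucc {n : ℕ} (k : Fin n) :
    (csucc k).val = if k.val + 1 = n then 0 else k.val + 1 := by
  unfold csucc
  split_ifs with h
  · simp [h]
  · exact Nat.mod_eq_of_lt (by omega)

lemma val_cpred {n : ℕ} (k : Fin n) :
    (cpred k).val = if k.val = 0 then n - 1 else k.val - 1 := by
  show (k.val + n - 1) % n = _
  split_ifs with h
  · simp [h]
  · rw [show k.val + n - 1 = k.val - 1 + n by omega, Nat.add_mod_right]
    exact Nat.mod_eq_of_lt (by omega)

@[simp]
lemma cpred_csucc {n : ℕ} (k : Fin n) : cpred (csucc k) = k := by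
  ext; rw [val_cpred, val_csucc]; grind

@[simp]
lemma csucc_cpred {n : ℕ} (k : Fin n) : csucc (cpred k) = k := by
  ext; rw [val_csucc, val_cpred]; grind

/- Reversing the closed subwalk between visits `i < j` to the same vertex: the new trace visits
position `k` at the old position `reflectVisit i j k`, and its step `k` is the old step
`reflectStep i j k` traversed backwards. -/

def reflectVisit {n : ℕ} (i j k : Fin n) : Fin n :=
  if h : i.val < k.val ∧ k.val < j.val then ⟨i.val + j.val - k.val, by omega⟩ else k

def reflectStep {n : ℕ} (i j k : Fin n) : Fin n :=
  if h : i.val ≤ k.val ∧ k.val < j.val then ⟨i.val + j.val - 1 - k.val, by omega⟩ else k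

lemma val_reflectVisit {n : ℕ} (i j k : Fin n) : (reflectVisit i j k).val =
    if i.val < k.val ∧ k.val < j.val then i.val + j.val - k.val else k.val := by
  unfold reflectVisit; split_ifs <;> rfl

lemma val_reflectStep {n : ℕ} (i j k : Fin n) : (reflectStep i j k).val =
    if i.val ≤ k.val ∧ k.val < j.val then i.val + j.val - 1 - k.val else k.val := by
  unfold reflectStep; split_ifs <;> rfl

@[simp]
lemma reflectVisit_reflectVisit {n : ℕ} (i j k : Fin n) :
    reflectVisit i j (reflectVisit i j k) = k := by
  ext; simp only [val_reflectVisit]; grind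

@[simp]
lemma reflectVisit_left {n : ℕ} (i j : Fin n) : reflectVisit i j i = i := by
  ext; simp [val_reflectVisit]

@[simp]
lemma reflectVisit_right {n : ℕ} (i j : Fin n) : reflectVisit i j j = j := by
  ext; simp [val_reflectVisit]

@[simp]
lemma reflectStep_reflectStep {n : ℕ} (i j k : Fin n) :
    reflectStep i j (reflectStep i j k) = k := by
  ext; simp only [val_reflectStep]; grind

end StrongTraces

lemma Sym2.iff_congr_of_mk_eq_mk {α : Type*} {a b c d : α} (h : s(a, b) = s(c, d))
    (p : α → Prop) : (p a ↔ p b) ↔ (p c ↔ p d) := by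
  rcases Sym2.eq_iff.1 h with ⟨rfl, rfl⟩ | ⟨rfl, rfl⟩
  · rfl
  · exact Iff.comm

namespace SimpleGraph

variable {V : Type*} {G : SimpleGraph V}

lemma Walk.mem_of_forall_adj_mem {s : Set V} (hs : ∀ x ∈ s, ∀ y, G.Adj x y → y ∈ s) {u v : V}
    (p : G.Walk u v) (hu : u ∈ s) : v ∈ s := by
  induction p with
  | nil => exact hu
  | cons h _ ih => exact ih (hs _ hu _ h)

lemma Preconnected.exists_adj_notMem_edges (hG : G.Preconnected) {u v : V} (p : G.Walk u v)
    {e : Sym2 V} (he : e ∈ G.edgeSet) (hp : e ∉ p.edges) :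
    ∃ x ∈ p.support, ∃ y, G.Adj x y ∧ s(x, y) ∉ p.edges := by
  by_contra! h
  induction e using Sym2.ind with
  | _ a b =>
  obtain ⟨q⟩ := hG u a
  have ha : a ∈ p.support :=
    q.mem_of_forall_adj_mem (fun x hx y hxy => p.snd_mem_support_of_mem_edges (h x hx y hxy))
      p.start_mem_support
  exact hp (h a ha b he)

variable [DecidableEq V]

lemma Walk.exists_count_edges_eq_add_detour {u v x y : V} (p : G.Walk u v)
    (hx : x ∈ p.support) (hxy : G.Adj x y) :
    ∃ q : G.Walk u v, ∀ e, q.edges.count e = p.edges.count e + if e = s(x, y) then 2 else 0 := by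
  refine ⟨(p.takeUntil x hx).append (.cons hxy (.cons hxy.symm (p.dropUntil x hx))), fun e => ?_⟩
  conv_rhs => rw [← p.take_spec hx]
  simp only [edges_append, edges_cons, List.count_append, List.count_cons, Sym2.eq_swap,
    beq_iff_eq]
  grind

lemma Connected.exists_walk_count_edges_eq_two [Finite V] (hG : G.Connected) :
    ∃ r, ∃ p : G.Walk r r, ∀ e ∈ G.edgeSet, p.edges.count e = 2 := by
  obtain ⟨r⟩ := hG.nonempty
  let uncovered (p : G.Walk r r) : Set (Sym2 V) := {e ∈ G.edgeSet | e ∉ p.edges}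
  obtain ⟨p, hp, hmin⟩ := (measure fun p => (uncovered p).ncard).wf.has_min
    {p | ∀ e, p.edges.count e = 0 ∨ p.edges.count e = 2} ⟨.nil, by simp⟩
  refine ⟨r, p, fun e he => (hp e).resolve_left fun h0 => ?_⟩
  obtain ⟨x, hx, y, hxy, hxyp⟩ :=
    hG.preconnected.exists_adj_notMem_edges p he (List.count_eq_zero.1 h0)
  obtain ⟨q, hq⟩ := p.exists_count_edges_eq_add_detour hx hxy
  have hcovered (e : Sym2 V) (he : e ∈ p.edges) : e ∈ q.edges := by
    rw [← List.count_pos_iff, hq]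
    exact (List.count_pos_iff.2 he).trans_le (Nat.le_add_right _ _)
  have hnew : s(x, y) ∈ q.edges := List.count_pos_iff.1 (by simp [hq])
  refine hmin q (fun e => ?_) (Set.ncard_lt_ncard ?_)
  · rw [hq]
    split_ifs with h
    · simp [h, List.count_eq_zero.2 hxyp]
    · simpa using hp e
  · have hsub : uncovered q ⊆ uncovered p := fun e he => ⟨he.1, fun hep => he.2 (hcovered e hep)⟩
    exact (Set.ssubset_iff_of_subset hsub).2 ⟨s(x, y), ⟨hxy, hxyp⟩, fun h => h.2 hnew⟩

end SimpleGraph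

namespace StrongTraces

open SimpleGraph Finset

variable {V : Type*} {G : SimpleGraph V}

lemma getVert_csucc {r : V} (p : G.Walk r r) (i : Fin p.length) :
    p.getVert (csucc i) = p.getVert (i + 1) := by
  rw [val_csucc]
  split_ifs with h
  · rw [h, p.getVert_length, p.getVert_zero]
  · rfl

variable [DecidableEq V]

def DoubleTrace.ofWalk {r : V} (p : G.Walk r r) (hp : ∀ e ∈ G.edgeSet, p.edges.count e = 2) :
    DoubleTrace G where
  n := p.length
  f i := p.getVert i
  adj i := getVert_csucc p i ▸ p.adj_getVert_succ i.isLt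
  twice e he := by
    rw [← hp e he]
    convert Fin.card_filter_univ_eq_vector_get_eq_count e ⟨p.edges, p.length_edges⟩ using 4 with i
    · rw [getVert_csucc]
      exact (p.getElem_edges (by simp)).symm
    · rfl

namespace DoubleTrace

variable (W : DoubleTrace G)

def repetitions : Set (V × Set V) := {p | W.HasRepetition p.1 p.2}

lemma traversalCount_add_traversalCount {u v : V} (h : G.Adj u v) :
    W.traversalCount u v + W.traversalCount v u = 2 := by
  rw [traversalCount, traversalCount, ← card_union_of_disjoint, ← W.twice s(u, v) h]
  · congr 1
    ext k
    simp
  · rw [disjoint_filter]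
    rintro k - ⟨rfl, -⟩ ⟨huv, -⟩
    exact h.ne huv

lemma traversalCount_eq_zero {u v : V} (h : ¬ G.Adj u v) : W.traversalCount u v = 0 := by
  rw [traversalCount, card_eq_zero, filter_eq_empty_iff]
  rintro k - ⟨rfl, rfl⟩
  exact h (W.adj k)

lemma even_traversalCount_add_traversalCount (u v : V) :
    Even (W.traversalCount u v + W.traversalCount v u) := by
  by_cases h : G.Adj u v
  · simp [W.traversalCount_add_traversalCount h]
  · simp [W.traversalCount_eq_zero h, W.traversalCount_eq_zero (mt G.adj_symm h)]

section Parity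

variable [Fintype V] (v : V) (S : Set V) [DecidablePred (· ∈ S)]

lemma card_visits_succ_mem :
    #{k | W.f k = v ∧ W.f (csucc k) ∈ S} = ∑ u with u ∈ S, W.traversalCount v u := by
  rw [card_eq_sum_card_fiberwise (f := fun k => W.f (csucc k)) (t := {u | u ∈ S})
    (fun k hk => by simpa using (mem_filter.1 hk).2.2)]
  refine sum_congr rfl fun u hu => ?_
  rw [traversalCount, filter_filter]
  congr 1
  exact filter_congr fun k _ =>
    ⟨fun h => ⟨h.1.1, h.2⟩, fun h => ⟨⟨h.1, h.2 ▸ (mem_filter.1 hu).2⟩, h.2⟩⟩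

lemma card_visits_pred_mem :
    #{k | W.f k = v ∧ W.f (cpred k) ∈ S} = ∑ u with u ∈ S, W.traversalCount u v := by
  have hshift : #{k | W.f k = v ∧ W.f (cpred k) ∈ S} = #{k | W.f (csucc k) = v ∧ W.f k ∈ S} :=
    card_bij' (fun k _ => cpred k) (fun k _ => csucc k) (by simp) (by simp) (by simp) (by simp)
  rw [hshift, card_eq_sum_card_fiberwise (f := W.f) (t := {u | u ∈ S})
    (fun k hk => by simpa using (mem_filter.1 hk).2.2)]
  refine sum_congr rfl fun u hu => ?_
  rw [traversalCount, filter_filter]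
  congr 1
  exact filter_congr fun k _ =>
    ⟨fun h => ⟨h.2, h.1.1⟩, fun h => ⟨⟨h.2, h.1 ▸ (mem_filter.1 hu).2⟩, h.1⟩⟩

/-- The visits to `v` entering from `S` and those leaving into `S` together number twice the
edges between `v` and `S`. -/
lemma even_card_visits_violating :
    Even #{k | W.f k = v ∧ ¬(W.f (cpred k) ∈ S ↔ W.f (csucc k) ∈ S)} := by
  have hsplit : #{k | W.f k = v ∧ ¬(W.f (cpred k) ∈ S ↔ W.f (csucc k) ∈ S)}
      + 2 * #{k | W.f k = v ∧ W.f (cpred k) ∈ S ∧ W.f (csucc k) ∈ S}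
      = #{k | W.f k = v ∧ W.f (cpred k) ∈ S} + #{k | W.f k = v ∧ W.f (csucc k) ∈ S} := by
    simp only [card_filter, mul_sum, ← sum_add_distrib]
    refine sum_congr rfl fun k _ => ?_
    split_ifs <;> tauto
  rw [card_visits_pred_mem, card_visits_succ_mem, ← sum_add_distrib] at hsplit
  have heven : Even (∑ u with u ∈ S, (W.traversalCount u v + W.traversalCount v u)) :=
    even_sum _ fun u _ => W.even_traversalCount_add_traversalCount u v
  rw [← hsplit] at heven
  exact (Nat.even_add.1 heven).2 (even_two_mul _)

end Parity

lemma exists_ne_visit_violating [Fintype V] {v : V} {S : Set V} {i : Fin W.n} (hi : W.f i = v)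
    (hviol : ¬(W.f (cpred i) ∈ S ↔ W.f (csucc i) ∈ S)) :
    ∃ k ≠ i, W.f k = v ∧ ¬(W.f (cpred k) ∈ S ↔ W.f (csucc k) ∈ S) := by
  classical
  by_contra! h
  have hsingle : ({k | W.f k = v ∧ ¬(W.f (cpred k) ∈ S ↔ W.f (csucc k) ∈ S)} : Finset _) = {i} :=
    eq_singleton_iff_unique_mem.2 ⟨by simp [hi, hviol], fun k hk => by_contra fun hki =>
      (mem_filter.1 hk).2.2 (h k hki (mem_filter.1 hk).2.1)⟩
  simpa [hsingle] using W.even_card_visits_violating v S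

section Reflect

variable {i j : Fin W.n}

lemma apply_eq_apply_of_eq_or (hf : W.f i = W.f j) {a b : Fin W.n}
    (h : a = b ∨ a = i ∧ b = j ∨ a = j ∧ b = i) : W.f a = W.f b := by
  rcases h with rfl | ⟨rfl, rfl⟩ | ⟨rfl, rfl⟩ <;> simp [hf]

lemma step_reflectVisit (hf : W.f i = W.f j) (k : Fin W.n) :
    s(W.f (reflectVisit i j k), W.f (reflectVisit i j (csucc k))) =
      s(W.f (reflectStep i j k), W.f (csucc (reflectStep i j k))) := by
  rw [Sym2.eq_iff]
  by_cases hk : i.val ≤ k.val ∧ k.val < j.val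
  · right
    constructor <;> apply W.apply_eq_apply_of_eq_or hf <;>
      simp only [Fin.ext_iff, val_reflectVisit, val_reflectStep, val_csucc] <;> grind
  · left
    constructor <;> apply W.apply_eq_apply_of_eq_or hf <;>
      simp only [Fin.ext_iff, val_reflectVisit, val_reflectStep, val_csucc] <;> grind

lemma neighbors_reflectVisit (hf : W.f i = W.f j) {k : Fin W.n} (hki : k ≠ i) (hkj : k ≠ j) :
    s(W.f (reflectVisit i j (cpred (reflectVisit i j k))),
        W.f (reflectVisit i j (csucc (reflectVisit i j k)))) =
      s(W.f (cpred k), W.f (csucc k)) := by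
  rw [Sym2.eq_iff]
  by_cases hk : i.val < k.val ∧ k.val < j.val
  · right
    constructor <;> apply W.apply_eq_apply_of_eq_or hf <;>
      simp only [Fin.ext_iff, val_reflectVisit, val_cpred, val_csucc] <;> grind
  · left
    constructor <;> apply W.apply_eq_apply_of_eq_or hf <;>
      simp only [Fin.ext_iff, val_reflectVisit, val_cpred, val_csucc] <;> grind

lemma neighbors_reflectVisit_left (hf : W.f i = W.f j) (hij : i < j) :
    W.f (reflectVisit i j (cpred i)) = W.f (cpred i) ∧
      W.f (reflectVisit i j (csucc i)) = W.f (cpred j) := by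
  constructor <;> apply W.apply_eq_apply_of_eq_or hf <;>
    simp only [Fin.ext_iff, val_reflectVisit, val_cpred, val_csucc] <;> grind

lemma neighbors_reflectVisit_right (hf : W.f i = W.f j) (hij : i < j) :
    W.f (reflectVisit i j (cpred j)) = W.f (csucc i) ∧
      W.f (reflectVisit i j (csucc j)) = W.f (csucc j) := by
  constructor <;> apply W.apply_eq_apply_of_eq_or hf <;>
    simp only [Fin.ext_iff, val_reflectVisit, val_cpred, val_csucc] <;> grind

def reflect (i j : Fin W.n) (hf : W.f i = W.f j) : DoubleTrace G where
  n := W.n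
  f k := W.f (reflectVisit i j k)
  adj k := by
    rw [← mem_edgeSet, W.step_reflectVisit hf k]
    exact W.adj _
  twice e he := by
    rw [← W.twice e he]
    refine card_bij' (fun k _ => reflectStep i j k) (fun k _ => reflectStep i j k) ?_ ?_
      (by simp) (by simp)
    · intro k hk
      simpa [← W.step_reflectVisit hf] using hk
    · intro k hk
      simpa [W.step_reflectVisit hf] using hk

variable {W}

lemma hasRepetition_of_reflect [Fintype V] {v : V} {S : Set V} (hrep : W.HasRepetition v S)
    (hi : W.f i = v) (hj : W.f j = v) (hij : i < j)
    (hiS : W.f (cpred i) ∈ S ∧ W.f (csucc i) ∈ S) (hjS : W.f (cpred j) ∉ S ∧ W.f (csucc j) ∉ S)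
    {w : V} {N : Set V} (h : (W.reflect i j (hi.trans hj.symm)).HasRepetition w N) :
    W.HasRepetition w N := by
  have hf := hi.trans hj.symm
  unfold HasRepetition at h
  dsimp only [reflect] at h
  have away (k : Fin W.n) (hki : k ≠ i) (hkj : k ≠ j) (hk : W.f k = w) :
      W.f (cpred k) ∈ N ↔ W.f (csucc k) ∈ N := by
    have := h (reflectVisit i j k) (by simpa using hk)
    rwa [Sym2.iff_congr_of_mk_eq_mk (W.neighbors_reflectVisit hf hki hkj)] at this
  have at_i (hw : W.f i = w) : W.f (cpred i) ∈ N ↔ W.f (csucc i) ∈ N := by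
    subst hw
    by_contra hviol
    -- `S ∩ N` would then be violated at `i` only
    obtain ⟨k, hki, hk, hkviol⟩ := W.exists_ne_visit_violating (S := S ∩ N) (i := i) rfl
      (by simpa [hiS.1, hiS.2] using hviol)
    by_cases hkj : k = j
    · subst hkj
      simp [hjS.1, hjS.2] at hkviol
    · have := away k hki hkj hk
      have := hrep k (hk.trans hi)
      simp only [Set.mem_inter_iff] at hkviol
      tauto
  intro k hk
  by_cases hki : k = i
  · exact hki ▸ at_i (hki ▸ hk)
  by_cases hkj : k = j
  · subst hkj
    have hw : W.f i = w := hf.trans hk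
    have h_at_i := h i (by simpa using hw)
    have h_at_j := h k (by simpa using hk)
    rw [(W.neighbors_reflectVisit_left hf hij).1, (W.neighbors_reflectVisit_left hf hij).2]
      at h_at_i
    rw [(W.neighbors_reflectVisit_right hf hij).1, (W.neighbors_reflectVisit_right hf hij).2]
      at h_at_j
    have := at_i hw
    tauto
  exact away k hki hkj hk

lemma not_hasRepetition_reflect {v : V} {S : Set V} (hi : W.f i = v) (hj : W.f j = v)
    (hij : i < j) (hiS : W.f (cpred i) ∈ S) (hjS : W.f (cpred j) ∉ S) :
    ¬ (W.reflect i j (hi.trans hj.symm)).HasRepetition v S := by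
  intro h
  have := h i (by simpa [reflect] using hi)
  dsimp only [reflect] at this
  have hf := hi.trans hj.symm
  rw [(W.neighbors_reflectVisit_left hf hij).1, (W.neighbors_reflectVisit_left hf hij).2] at this
  exact hjS (this.1 hiS)

lemma reflect_repetitions_ssubset [Fintype V] {v : V} {S : Set V} (hrep : W.HasRepetition v S)
    (hi : W.f i = v) (hj : W.f j = v) (hij : i < j)
    (hiS : W.f (cpred i) ∈ S ∧ W.f (csucc i) ∈ S) (hjS : W.f (cpred j) ∉ S ∧ W.f (csucc j) ∉ S) :
    (W.reflect i j (hi.trans hj.symm)).repetitions ⊂ W.repetitions :=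
  (Set.ssubset_iff_of_subset fun _ hp => hasRepetition_of_reflect hrep hi hj hij hiS hjS hp).2
    ⟨(v, S), hrep, W.not_hasRepetition_reflect hi hj hij hiS.1 hjS.1⟩

end Reflect

variable {W}

lemma HasRepetition.compl {v : V} {N : Set V} (h : W.HasRepetition v N) :
    W.HasRepetition v Nᶜ :=
  fun k hk => (h k hk).not

lemma HasRepetition.exists_visit_mem_mem {v u : V} {S : Set V} (h : W.HasRepetition v S)
    (hu : u ∈ S) (hvu : G.Adj v u) :
    ∃ k, W.f k = v ∧ W.f (cpred k) ∈ S ∧ W.f (csucc k) ∈ S := by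
  obtain ⟨k, hk⟩ : ({k | s(W.f k, W.f (csucc k)) = s(v, u)} : Finset _).Nonempty := by
    rw [← card_pos, W.twice _ hvu]
    norm_num
  rcases Sym2.eq_iff.1 (mem_filter.1 hk).2 with ⟨hkv, hku⟩ | ⟨hku, hkv⟩
  · exact ⟨k, hkv, (h k hkv).2 (hku ▸ hu), hku ▸ hu⟩
  · exact ⟨csucc k, hkv, by simpa [hku] using hu, (h _ hkv).1 (by simpa [hku] using hu)⟩

lemma exists_repetitions_ssubset [Fintype V] {v : V} {N : Set V} (hN : N ⊆ G.neighborSet v)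
    (hrep : W.HasRepetition v N) (hne : N.Nonempty) (hne' : N ≠ G.neighborSet v) :
    ∃ W' : DoubleTrace G, W'.repetitions ⊂ W.repetitions := by
  obtain ⟨u, hu⟩ := hne
  obtain ⟨u', hu'v, hu'N⟩ := Set.exists_of_ssubset (hN.ssubset_of_ne hne')
  obtain ⟨i, hi, hiN⟩ := hrep.exists_visit_mem_mem hu (hN hu)
  obtain ⟨j, hj, hjN⟩ := hrep.compl.exists_visit_mem_mem hu'N hu'v
  rcases lt_trichotomy i j with hij | rfl | hji
  · exact ⟨_, reflect_repetitions_ssubset hrep hi hj hij hiN hjN⟩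
  · exact absurd hiN.1 hjN.1
  · exact ⟨_, reflect_repetitions_ssubset hrep.compl hj hi hji hjN (by simpa using hiN)⟩

end DoubleTrace

theorem exists_strongTrace_general {V : Type*} [Fintype V] [DecidableEq V]
    (G : SimpleGraph V) (hconn : G.Connected) :
    ∃ W : DoubleTrace G, W.IsStrong := by
  obtain ⟨r, p, hp⟩ := hconn.exists_walk_count_edges_eq_two
  obtain ⟨W, -, hmin⟩ := (measure fun W : DoubleTrace G => W.repetitions.ncard).wf.has_min
    Set.univ ⟨.ofWalk p hp, trivial⟩
  refine ⟨W, fun v N hN hrep => ?_⟩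
  by_contra! hN'
  obtain ⟨W', hW'⟩ := W.exists_repetitions_ssubset hN hrep hN'.1 hN'.2
  exact hmin W' trivial (Set.ncard_lt_ncard hW')

/-- Every finite connected graph with at least one edge admits a
strong trace. -/
theorem exists_strongTrace {V : Type*} [Fintype V] [DecidableEq V]
    (G : SimpleGraph V) (hconn : G.Connected) (hE : G.edgeSet.Nonempty) :
    ∃ W : DoubleTrace G, W.IsStrong :=
  exists_strongTrace_general G hconn

end StrongTraces
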